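/- Let (R₁, Ad_{Γ₁}) and (R₂, Ad_{Γ₂}) be graded von Neumann algebras on Hilbert spaces H₁, H₂, and let R₁ ⊗̂ R₂ denote their graded tensor product, graded by Ad_{I⊗Γ₂}. Then the even part of R₁ ⊗̂ R₂ with respect to this grading equals the von Neumann tensor product R₁ ⊗̄ (R₂)^(0). Moreover, if (R₂, Ad_{Γ₂}) is balanced, then (R₁ ⊗̂ R₂, Ad_{I⊗Γ₂}) is balanced. -/

import Mathlib

noncomputable section

variable {H : Type*} [NormedAddCommGroup H] [InnerProductSpace ℂ H] [CompleteSpace H]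

/-- A self-adjoint unitary operator. -/
def IsSAU (Γ : H →L[ℂ] H) : Prop := star Γ = Γ ∧ Γ * Γ = 1

/-- The even part of a graded set of operators. -/
def evenPart (R : Set (H →L[ℂ] H)) (Γ : H →L[ℂ] H) : Set (H →L[ℂ] H) :=
  {x | x ∈ R ∧ Γ * x * Γ = x}

/-- The odd part of a graded set of operators. -/
def oddPart (R : Set (H →L[ℂ] H)) (Γ : H →L[ℂ] H) : Set (H →L[ℂ] H) :=
  {x | x ∈ R ∧ Γ * x * Γ = -x}

/-- The center of a set of operators. -/
def centerSet (R : Set (H →L[ℂ] H)) : Set (H →L[ℂ] H) :=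
  {x | x ∈ R ∧ ∀ y ∈ R, x * y = y * x}

/-- An (orthogonal) projection operator. -/
def IsProjOp (e : H →L[ℂ] H) : Prop := e * e = e ∧ star e = e

/-- `e` is a subprojection of `f`. -/
def SubProj (e f : H →L[ℂ] H) : Prop := e * f = e ∧ f * e = e

/-- Murray–von Neumann equivalence of projections relative to `M`. -/
def MvNEquiv (M : Set (H →L[ℂ] H)) (e f : H →L[ℂ] H) : Prop :=
  ∃ v ∈ M, star v * v = e ∧ v * star v = f

/-- `e` is finite relative to `M`. -/
def FiniteProj (M : Set (H →L[ℂ] H)) (e : H →L[ℂ] H) : Prop :=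
  ∀ f ∈ M, IsProjOp f → SubProj f e → MvNEquiv M f e → f = e

/-- `e` is an abelian projection relative to `M`: the corner `eMe` is commutative. -/
def AbelianProj (M : Set (H →L[ℂ] H)) (e : H →L[ℂ] H) : Prop :=
  ∀ x ∈ M, ∀ y ∈ M, (e * x * e) * (e * y * e) = (e * y * e) * (e * x * e)

/-- A von Neumann algebra (given as a set) is of type III: no nonzero finite projections. -/
def TypeIII (M : Set (H →L[ℂ] H)) : Prop :=
  ∀ e ∈ M, IsProjOp e → FiniteProj M e → e = 0

/-- Type II₁ : finite with no nonzero abelian projections. -/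
def TypeII1 (M : Set (H →L[ℂ] H)) : Prop :=
  FiniteProj M 1 ∧ ∀ e ∈ M, IsProjOp e → AbelianProj M e → e = 0

/-- Type I_n : the identity is the sum of `n` orthogonal, mutually equivalent
abelian projections. -/
def TypeI (M : Set (H →L[ℂ] H)) (n : Cardinal) : Prop :=
  ∃ (ι : Type) (E : ι → H →L[ℂ] H), Cardinal.mk ι = n ∧
    (∀ a, E a ∈ M ∧ IsProjOp (E a) ∧ AbelianProj M (E a)) ∧
    (Pairwise fun a b => E a * E b = 0) ∧
    (∀ a b, MvNEquiv M (E a) (E b)) ∧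
    (∀ v : H, HasSum (fun a => (E a) v) v)

/-- The scalar operators. -/
def scalarOps (H : Type*) [NormedAddCommGroup H] [InnerProductSpace ℂ H] [CompleteSpace H] :
    Set (H →L[ℂ] H) := Set.range fun c : ℂ => c • (1 : H →L[ℂ] H)

/-- `M` is a factor. -/
def IsFactor (M : Set (H →L[ℂ] H)) : Prop := centerSet M = scalarOps H

/-- `R` is graded by the self-adjoint unitary `Γ`. -/
def GradedBy (R : Set (H →L[ℂ] H)) (Γ : H →L[ℂ] H) : Prop :=
  IsSAU Γ ∧ ∀ x ∈ R, Γ * x * Γ ∈ R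

/-- The von Neumann algebra generated by a (star-closed, unital) set:
its double commutant. -/
def genVN (S : Set (H →L[ℂ] H)) : Set (H →L[ℂ] H) :=
  Set.centralizer (Set.centralizer S)

/-- `c` is the central support of `T` in `M`. -/
def IsCentralSupport (M : Set (H →L[ℂ] H)) (T c : H →L[ℂ] H) : Prop :=
  c ∈ centerSet M ∧ IsProjOp c ∧ c * T = T ∧
    ∀ d ∈ centerSet M, IsProjOp d → d * T = T → c * d = c

section Tensor

variable {H₁ H₂ K : Type*}
  [NormedAddCommGroup H₁] [InnerProductSpace ℂ H₁] [CompleteSpace H₁]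
  [NormedAddCommGroup H₂] [InnerProductSpace ℂ H₂] [CompleteSpace H₂]
  [NormedAddCommGroup K] [InnerProductSpace ℂ K] [CompleteSpace K]

/-- `T` realizes the (spatial) tensor product of operators: it is bilinear,
multiplicative, star-preserving and unital, modelling `A ⊗ B` on `H₁ ⊗ H₂ = K`. -/
def IsTensorMap (T : (H₁ →L[ℂ] H₁) → (H₂ →L[ℂ] H₂) → (K →L[ℂ] K)) : Prop :=
  T 1 1 = 1 ∧
  (∀ A B C D, T A B * T C D = T (A * C) (B * D)) ∧
  (∀ A B, star (T A B) = T (star A) (star B)) ∧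
  (∀ A A' B, T (A + A') B = T A B + T A' B) ∧
  (∀ A B B', T A (B + B') = T A B + T A B') ∧
  (∀ (c : ℂ) A B, T (c • A) B = c • T A B) ∧
  (∀ (c : ℂ) A B, T A (c • B) = c • T A B)

/-- The graded tensor product `R₁ ⊗̂ R₂`: the von Neumann algebra generated by the
operators `A Γ₁^(∂B) ⊗ B` for homogeneous `B`. -/
def gradedTP (T : (H₁ →L[ℂ] H₁) → (H₂ →L[ℂ] H₂) → (K →L[ℂ] K))
    (R₁ : Set (H₁ →L[ℂ] H₁)) (Γ₁ : H₁ →L[ℂ] H₁)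
    (R₂ : Set (H₂ →L[ℂ] H₂)) (Γ₂ : H₂ →L[ℂ] H₂) : Set (K →L[ℂ] K) :=
  genVN ({x | ∃ A ∈ R₁, ∃ B ∈ evenPart R₂ Γ₂, x = T A B} ∪
         {x | ∃ A ∈ R₁, ∃ B ∈ oddPart R₂ Γ₂, x = T (A * Γ₁) B})

/-- The ordinary von Neumann tensor product `R₁ ⊗̄ R₂`: generated by simple tensors. -/
def normalTP (T : (H₁ →L[ℂ] H₁) → (H₂ →L[ℂ] H₂) → (K →L[ℂ] K))
    (R₁ : Set (H₁ →L[ℂ] H₁)) (R₂ : Set (H₂ →L[ℂ] H₂)) : Set (K →L[ℂ] K) :=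
  genVN {x | ∃ A ∈ R₁, ∃ B ∈ R₂, x = T A B}

end Tensor

/-!
Let `Γ = 1 ⊗ Γ₂`. The generators `A ⊗ B` (`B` even) and `AΓ₁ ⊗ B` (`B` odd) of `R₁ ⊗̂ R₂` are
closed under adjoints and multiply with degrees adding in `ℤ/2`, so they span a `⋆`-algebra
`𝒜 = 𝒜⁰ ⊕ 𝒜¹` graded by `Ad Γ`, whose even part `𝒜⁰` is spanned by the even generators. An even `x ∈ 𝒜''` is, by von Neumann's density theorem,
approximated on finitely many vectors by some `a ∈ 𝒜`; since `x = ΓxΓ`, it is then also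
approximated by the even component `(a + ΓaΓ)/2 ∈ 𝒜⁰`, which commutes with every `y ∈ (𝒜⁰)'`.
Testing on `ξ, Γξ, yξ, Γyξ` gives `xy = yx`, i.e. `x ∈ (𝒜⁰)'' = R₁ ⊗̄ R₂⁰`.
If `U ∈ R₂` is an odd self-adjoint unitary, then so is `Γ₁ ⊗ U` in `R₁ ⊗̂ R₂`.
-/

lemma genVN_eq_of_subset_of_subset_genVN {E : Type*} [NormedAddCommGroup E]
    [InnerProductSpace ℂ E] {S T : Set (E →L[ℂ] E)} (hST : S ⊆ T)
    (hT : T ⊆ genVN S) : genVN T = genVN S := by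
  have hS : T.centralizer = S.centralizer := (Set.centralizer_subset hST).antisymm
    (Set.centralizer_centralizer_centralizer S ▸ Set.centralizer_subset hT)
  rw [genVN, genVN, hS]

lemma isSAU_one : IsSAU (1 : H →L[ℂ] H) := ⟨star_one _, mul_one 1⟩

namespace IsSAU

variable {Γ : H →L[ℂ] H}

lemma conj_mul (hΓ : IsSAU Γ) (a b : H →L[ℂ] H) : Γ * (a * b) * Γ = Γ * a * Γ * (Γ * b * Γ) := by
  simp only [mul_assoc, ← mul_assoc Γ Γ, hΓ.2, one_mul]

lemma conj_conj (hΓ : IsSAU Γ) (a : H →L[ℂ] H) : Γ * (Γ * a * Γ) * Γ = a := by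
  simp only [mul_assoc, hΓ.2, mul_one, ← mul_assoc Γ Γ, one_mul]

lemma mul_conj_mul (hΓ : IsSAU Γ) (a b : H →L[ℂ] H) : a * Γ * b = a * (Γ * b * Γ) * Γ := by
  simp only [mul_assoc, hΓ.2, mul_one]

lemma star_conj (hΓ : IsSAU Γ) (a : H →L[ℂ] H) : star (Γ * a * Γ) = Γ * star a * Γ := by
  simp only [star_mul, hΓ.1, mul_assoc]

lemma conj_eq_self_iff (hΓ : IsSAU Γ) {a : H →L[ℂ] H} : Γ * a * Γ = a ↔ Γ * a = a * Γ := by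
  constructor <;> intro h
  · rw [← mul_one (Γ * a), ← hΓ.2, ← mul_assoc, h]
  · rw [h, mul_assoc, hΓ.2, mul_one]

lemma mem_unitary (hΓ : IsSAU Γ) : Γ ∈ unitary (H →L[ℂ] H) :=
  Unitary.mem_iff.2 ⟨by rw [hΓ.1, hΓ.2], by rw [hΓ.1, hΓ.2]⟩

lemma norm_apply (hΓ : IsSAU Γ) (v : H) : ‖Γ v‖ = ‖v‖ :=
  ContinuousLinearMap.norm_map_of_mem_unitary hΓ.mem_unitary v

end IsSAU

lemma PiLp.univ_sum_single {ι : Type*} [Fintype ι] [DecidableEq ι] {p : ENNReal}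
    {β : ι → Type*} [∀ i, AddCommGroup (β i)] (v : PiLp p β) :
    ∑ i, PiLp.single p i (v i) = v := by
  ext i
  rw [WithLp.ofLp_sum, Finset.sum_apply]
  simp

section Ampliation

variable {ι : Type*} [Fintype ι]

variable (H ι) in
def ampliation : (H →L[ℂ] H) →⋆ₐ[ℂ] (PiLp 2 (fun _ : ι => H) →L[ℂ] PiLp 2 (fun _ : ι => H)) where
  toFun a := (PiLp.continuousLinearEquiv 2 ℂ _).symm.toContinuousLinearMap ∘L
    ContinuousLinearMap.piMap (fun _ => a) ∘L
      (PiLp.continuousLinearEquiv 2 ℂ _).toContinuousLinearMap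
  map_one' := by ext; rfl
  map_mul' _ _ := by ext; rfl
  map_zero' := by ext; rfl
  map_add' _ _ := by ext; rfl
  commutes' _ := by ext; rfl
  map_star' a := by
    rw [ContinuousLinearMap.star_eq_adjoint]
    refine (ContinuousLinearMap.eq_adjoint_iff _ _).2 fun v w => ?_
    simp [PiLp.inner_apply, ContinuousLinearMap.adjoint_inner_left]

@[simp] lemma ampliation_apply (a : H →L[ℂ] H) (v : PiLp 2 (fun _ : ι => H)) (i : ι) :
    ampliation H ι a v i = a (v i) := rfl

lemma ampliation_single [DecidableEq ι] (a : H →L[ℂ] H) (j : ι) (w : H) :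
    ampliation H ι a (PiLp.single 2 j w) = PiLp.single 2 j (a w) := by
  ext i
  simp only [ampliation_apply, PiLp.single_apply]
  split_ifs <;> simp

lemma ampliation_mem_centralizer_centralizer {S : Set (H →L[ℂ] H)} {x : H →L[ℂ] H}
    (hx : x ∈ S.centralizer.centralizer) :
    ampliation H ι x ∈ (ampliation H ι '' S).centralizer.centralizer := by
  classical
  intro Y hY
  -- the matrix entries of `Y` commute with `S`, hence with `x`
  let entry (i j : ι) : H →L[ℂ] H := PiLp.proj 2 _ i ∘L Y ∘L
    (PiLp.continuousLinearEquiv 2 ℂ _).symm.toContinuousLinearMap ∘L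
      ContinuousLinearMap.single ℂ (fun _ : ι => H) j
  have entry_apply (i j : ι) (w : H) : entry i j w = Y (PiLp.single 2 j w) i := rfl
  have entry_mem (i j : ι) : entry i j ∈ S.centralizer := by
    intro s hs
    ext w
    have h := congrArg (fun Z : PiLp 2 (fun _ : ι => H) →L[ℂ] PiLp 2 (fun _ : ι => H) =>
      Z (PiLp.single 2 j w) i) (hY _ ⟨s, hs, rfl⟩)
    simpa [entry_apply, ampliation_single] using h
  have Y_apply (v : PiLp 2 (fun _ : ι => H)) (i : ι) : Y v i = ∑ j, entry i j (v j) := by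
    conv_lhs => rw [← PiLp.univ_sum_single v]
    simp [entry_apply]
  ext v i
  have entry_comm (j : ι) (w : H) : entry i j (x w) = x (entry i j w) :=
    congrArg (fun Z : H →L[ℂ] H => Z w) (hx _ (entry_mem i j))
  simp [Y_apply, entry_comm]

end Ampliation

lemma starProjection_mem_centralizer {S : Set (H →L[ℂ] H)} (hS : ∀ a ∈ S, star a ∈ S)
    (U : Submodule ℂ H) [U.HasOrthogonalProjection] (hU : ∀ a ∈ S, ∀ u ∈ U, a u ∈ U) :
    U.starProjection ∈ S.centralizer := by
  intro a ha
  ext v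
  show a (U.starProjection v) = U.starProjection (a v)
  have hperp : a (v - U.starProjection v) ∈ Uᗮ := by
    refine ContinuousLinearMap.orthogonal_mem_invtSubmodule ?_
      (U.sub_starProjection_mem_orthogonal v)
    rw [Module.End.mem_invtSubmodule_iff_forall_mem_of_mem, ← ContinuousLinearMap.star_eq_adjoint]
    exact hU _ (hS a ha)
  have hsplit : a v = a (U.starProjection v) + a (v - U.starProjection v) := by
    rw [← map_add, add_sub_cancel]
  rw [hsplit, map_add, U.starProjection_eq_self_iff.2 (hU a ha _ (U.starProjection_apply_mem v)),
    U.starProjection_apply_eq_zero_iff.2 hperp, add_zero]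

lemma apply_mem_closure_of_mem_centralizer_centralizer (A : StarSubalgebra ℂ (H →L[ℂ] H))
    {x : H →L[ℂ] H} (hx : x ∈ (A : Set (H →L[ℂ] H)).centralizer.centralizer) (ξ : H) :
    x ξ ∈ closure ((fun a : H →L[ℂ] H => a ξ) '' A) := by
  let W : Submodule ℂ H := (Subalgebra.toSubmodule A.toSubalgebra).map
    (ContinuousLinearMap.apply ℂ H ξ : (H →L[ℂ] H) →ₗ[ℂ] H)
  let M := W.topologicalClosure
  have : CompleteSpace M := W.isClosed_topologicalClosure.completeSpace_coe
  have hM : (M : Set H) = closure ((fun a : H →L[ℂ] H => a ξ) '' A) := by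
    rw [Submodule.topologicalClosure_coe, Submodule.map_coe]
    rfl
  have hinv (a : H →L[ℂ] H) (ha : a ∈ A) (u : H) (hu : u ∈ M) : a u ∈ M := by
    rw [← SetLike.mem_coe, hM] at hu ⊢
    refine map_mem_closure a.continuous hu ?_
    rintro _ ⟨b, hb, rfl⟩
    exact ⟨a * b, A.mul_mem ha hb, rfl⟩
  have hξ : ξ ∈ M := W.le_topologicalClosure ⟨1, A.one_mem, rfl⟩
  have hP := congrArg (fun Z : H →L[ℂ] H => Z ξ)
    (hx _ (starProjection_mem_centralizer (fun a ha => star_mem ha) M hinv))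
  rw [← hM, SetLike.mem_coe, ← M.starProjection_eq_self_iff.2 hξ]
  exact hP ▸ M.starProjection_apply_mem (x ξ)

/-- von Neumann's density theorem: the double commutant of a unital `⋆`-algebra of operators
lies in its strong closure. -/
theorem exists_norm_sub_apply_lt_of_mem_centralizer_centralizer
    (A : StarSubalgebra ℂ (H →L[ℂ] H)) {x : H →L[ℂ] H}
    (hx : x ∈ (A : Set (H →L[ℂ] H)).centralizer.centralizer) {ι : Type*} [Fintype ι]
    (ξ : ι → H) {ε : ℝ} (hε : 0 < ε) :
    ∃ a ∈ A, ∀ i, ‖x (ξ i) - a (ξ i)‖ < ε := by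
  have hx' : ampliation H ι x ∈ ((A.map (ampliation H ι) : Set _)).centralizer.centralizer := by
    rw [StarSubalgebra.coe_map]
    exact ampliation_mem_centralizer_centralizer hx
  obtain ⟨_, ⟨_, ⟨a, ha, rfl⟩, rfl⟩, hdist⟩ := Metric.mem_closure_iff.1
    (apply_mem_closure_of_mem_centralizer_centralizer _ hx' (WithLp.toLp 2 ξ)) ε hε
  rw [dist_eq_norm] at hdist
  exact ⟨a, ha, fun i => (PiLp.norm_apply_le _ i).trans_lt hdist⟩

def evenComponent {E : Type*} [NormedAddCommGroup E] [NormedSpace ℂ E] (Γ a : E →L[ℂ] E) :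
    E →L[ℂ] E :=
  (2⁻¹ : ℂ) • (a + Γ * a * Γ)

lemma IsSAU.evenComponent_mem_evenPart {Γ : H →L[ℂ] H} (hΓ : IsSAU Γ)
    {A : StarSubalgebra ℂ (H →L[ℂ] H)} (hA : ∀ a ∈ A, Γ * a * Γ ∈ A) {a : H →L[ℂ] H}
    (ha : a ∈ A) : evenComponent Γ a ∈ evenPart A Γ := by
  refine ⟨A.smul_mem (A.add_mem ha (hA a ha)) _, ?_⟩
  simp only [evenComponent, mul_smul_comm, smul_mul_assoc, mul_add, add_mul, hΓ.conj_conj, add_comm]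

lemma IsSAU.norm_sub_evenComponent_apply_le {Γ x : H →L[ℂ] H} (hΓ : IsSAU Γ)
    (hx : Γ * x * Γ = x) (a : H →L[ℂ] H) (v : H) :
    ‖x v - evenComponent Γ a v‖ ≤ 2⁻¹ * (‖x v - a v‖ + ‖x (Γ v) - a (Γ v)‖) := by
  have hxv : x v = Γ (x (Γ v)) := by
    conv_lhs => rw [← hx]
    rfl
  have hconj : (Γ * a * Γ) v = Γ (a (Γ v)) := rfl
  have key : x v - evenComponent Γ a v =
      (2⁻¹ : ℂ) • ((x v - a v) + Γ (x (Γ v) - a (Γ v))) := by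
    simp only [evenComponent, FunLike.coe_smul, FunLike.coe_add, Pi.smul_apply,
      Pi.add_apply, hconj]
    rw [map_sub, ← hxv]
    module
  calc ‖x v - evenComponent Γ a v‖
      = 2⁻¹ * ‖(x v - a v) + Γ (x (Γ v) - a (Γ v))‖ := by rw [key, norm_smul]; norm_num
    _ ≤ 2⁻¹ * (‖x v - a v‖ + ‖Γ (x (Γ v) - a (Γ v))‖) := by gcongr; exact norm_add_le _ _
    _ = 2⁻¹ * (‖x v - a v‖ + ‖x (Γ v) - a (Γ v)‖) := by rw [hΓ.norm_apply]

theorem evenPart_genVN_of_conj_mem (A : StarSubalgebra ℂ (H →L[ℂ] H)) {Γ : H →L[ℂ] H}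
    (hΓ : IsSAU Γ) (hA : ∀ a ∈ A, Γ * a * Γ ∈ A) :
    evenPart (genVN (A : Set (H →L[ℂ] H))) Γ = genVN (evenPart A Γ) := by
  apply subset_antisymm
  · rintro x ⟨hx, hxΓ⟩ y hy
    ext ξ
    refine eq_of_forall_dist_le fun ε hε => ?_
    -- approximate `x` by `a ∈ A` on four vectors; the even component of `a` commutes with `y`
    set δ := ε / (‖y‖ + 1)
    obtain ⟨a, ha, hxa⟩ := exists_norm_sub_apply_lt_of_mem_centralizer_centralizer A hx
      ![ξ, Γ ξ, y ξ, Γ (y ξ)] (by positivity : 0 < δ)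
    set a₀ := evenComponent Γ a
    have ha₀ : a₀ ∈ evenPart A Γ := hΓ.evenComponent_mem_evenPart hA ha
    have hya₀ : y (a₀ ξ) = a₀ (y ξ) := congrArg (fun Z : H →L[ℂ] H => Z ξ) (hy a₀ ha₀).symm
    have hx₀ (v : H) (h₁ : ‖x v - a v‖ < δ) (h₂ : ‖x (Γ v) - a (Γ v)‖ < δ) :
        ‖x v - a₀ v‖ ≤ δ :=
      (hΓ.norm_sub_evenComponent_apply_le hxΓ a v).trans (by linarith)
    calc dist (y (x ξ)) (x (y ξ))
        = ‖y (x ξ - a₀ ξ) - (x (y ξ) - a₀ (y ξ))‖ := by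
          rw [dist_eq_norm, map_sub, hya₀]; abel_nf
      _ ≤ ‖y‖ * ‖x ξ - a₀ ξ‖ + ‖x (y ξ) - a₀ (y ξ)‖ :=
          (norm_sub_le _ _).trans (by gcongr; exact y.le_opNorm _)
      _ ≤ ‖y‖ * δ + δ := by
          gcongr
          · exact hx₀ ξ (hxa 0) (hxa 1)
          · exact hx₀ (y ξ) (hxa 2) (hxa 3)
      _ = ε := by rw [← add_one_mul, mul_div_cancel₀ _ (by positivity)]
  · intro x hx
    have hΓ_mem : Γ ∈ (evenPart A Γ).centralizer := fun e he =>
      ((hΓ.conj_eq_self_iff).1 he.2).symm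
    refine ⟨Set.centralizer_subset (Set.centralizer_subset fun _ h => h.1) hx, ?_⟩
    exact hΓ.conj_eq_self_iff.2 (hx Γ hΓ_mem)

section GradedFamily

open Pointwise Submodule

variable {R A : Type*} [CommRing R] [Ring A] [Algebra R A]

lemma conj_eq_smul_of_mem_span {g : A} {c : R} {S : Set A} (hS : ∀ s ∈ S, g * s * g = c • s)
    {a : A} (ha : a ∈ span R S) : g * a * g = c • a := by
  exact LinearMap.eqOn_span' (f := LinearMap.mulRight R g ∘ₗ LinearMap.mulLeft R g)
    (g := c • LinearMap.id) (fun s hs => by simpa using hS s hs) ha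

variable [StarRing R] [StarRing A] [StarModule R A]

structure IsGradedStarFamily (S₀ S₁ : Set A) : Prop where
  one_mem : 1 ∈ S₀
  mul_even_even : S₀ * S₀ ⊆ S₀
  mul_even_odd : S₀ * S₁ ⊆ S₁
  mul_odd_even : S₁ * S₀ ⊆ S₁
  mul_odd_odd : S₁ * S₁ ⊆ S₀
  star_even : ∀ s ∈ S₀, star s ∈ S₀
  star_odd : ∀ s ∈ S₁, star s ∈ S₁

lemma star_mem_span_of_forall_star_mem {S : Set A} (hS : ∀ s ∈ S, star s ∈ S) {a : A}
    (ha : a ∈ span R S) : star a ∈ span R S := by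
  induction ha using span_induction with
  | mem s hs => exact subset_span (hS s hs)
  | zero => simp
  | add a b _ _ ha hb => simpa using add_mem ha hb
  | smul c a _ ha => simpa using smul_mem _ (star c) ha

variable {S₀ S₁ : Set A}

variable (R) in
def IsGradedStarFamily.starSubalgebra (h : IsGradedStarFamily S₀ S₁) : StarSubalgebra R A where
  toSubalgebra := (span R S₀ ⊔ span R S₁).toSubalgebra (mem_sup_left (subset_span h.one_mem))
    fun a b ha hb => by
      have span_mul_le {S T U : Set A} (hST : S * T ⊆ U) : span R S * span R T ≤ span R U :=
        span_mul_span R S T ▸ span_mono hST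
      refine mul_le.1 ?_ a ha b hb
      rw [Submodule.mul_sup, Submodule.sup_mul, Submodule.sup_mul]
      exact sup_le (sup_le ((span_mul_le h.mul_even_even).trans le_sup_left)
          ((span_mul_le h.mul_odd_even).trans le_sup_right))
        (sup_le ((span_mul_le h.mul_even_odd).trans le_sup_right)
          ((span_mul_le h.mul_odd_odd).trans le_sup_left))
  star_mem' {a} ha := by
    obtain ⟨a₀, ha₀, a₁, ha₁, rfl⟩ := mem_sup.1 ha
    rw [star_add]
    exact add_mem (mem_sup_left (star_mem_span_of_forall_star_mem h.star_even ha₀))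
      (mem_sup_right (star_mem_span_of_forall_star_mem h.star_odd ha₁))

lemma IsGradedStarFamily.mem_starSubalgebra (h : IsGradedStarFamily S₀ S₁) {a : A} :
    a ∈ h.starSubalgebra R ↔ ∃ a₀ ∈ span R S₀, ∃ a₁ ∈ span R S₁, a₀ + a₁ = a :=
  mem_sup

variable (R) in
lemma IsGradedStarFamily.subset_starSubalgebra (h : IsGradedStarFamily S₀ S₁) :
    S₀ ∪ S₁ ⊆ h.starSubalgebra R := by
  rintro s (hs | hs)
  · exact h.mem_starSubalgebra.2 ⟨s, subset_span hs, 0, zero_mem _, add_zero s⟩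
  · exact h.mem_starSubalgebra.2 ⟨0, zero_mem _, s, subset_span hs, zero_add s⟩

lemma IsGradedStarFamily.starSubalgebra_subset (h : IsGradedStarFamily S₀ S₁)
    {B : Subalgebra R A} (hB : S₀ ∪ S₁ ⊆ B) : (h.starSubalgebra R : Set A) ⊆ B := fun _ ha =>
  (sup_le (span_le.2 fun _ hs => hB (Or.inl hs)) (span_le.2 fun _ hs => hB (Or.inr hs)) :
    span R S₀ ⊔ span R S₁ ≤ Subalgebra.toSubmodule B) ha

end GradedFamily

theorem evenPart_genVN_union {S₀ S₁ : Set (H →L[ℂ] H)} (h : IsGradedStarFamily S₀ S₁)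
    {Γ : H →L[ℂ] H} (hΓ : IsSAU Γ) (h₀ : ∀ s ∈ S₀, Γ * s * Γ = s)
    (h₁ : ∀ s ∈ S₁, Γ * s * Γ = -s) :
    evenPart (genVN (S₀ ∪ S₁)) Γ = genVN S₀ := by
  let A := h.starSubalgebra ℂ
  have hA : genVN A = genVN (S₀ ∪ S₁) := by
    refine genVN_eq_of_subset_of_subset_genVN (h.subset_starSubalgebra ℂ) ?_
    rw [genVN, ← Subalgebra.coe_centralizer ℂ]
    exact h.starSubalgebra_subset fun s hs => Set.subset_centralizer_centralizer hs
  have hconj {a₀ a₁ : H →L[ℂ] H} (ha₀ : a₀ ∈ Submodule.span ℂ S₀)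
      (ha₁ : a₁ ∈ Submodule.span ℂ S₁) : Γ * (a₀ + a₁) * Γ = a₀ - a₁ := by
    rw [mul_add, add_mul, conj_eq_smul_of_mem_span (c := (1 : ℂ)) (by simpa using h₀) ha₀,
      conj_eq_smul_of_mem_span (c := (-1 : ℂ)) (by simpa using h₁) ha₁]
    simp [sub_eq_add_neg]
  have hAΓ (a : H →L[ℂ] H) (ha : a ∈ A) : Γ * a * Γ ∈ A := by
    obtain ⟨a₀, ha₀, a₁, ha₁, rfl⟩ := h.mem_starSubalgebra.1 ha
    rw [hconj ha₀ ha₁]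
    exact h.mem_starSubalgebra.2 ⟨a₀, ha₀, -a₁, neg_mem ha₁, sub_eq_add_neg a₀ a₁ ▸ rfl⟩
  have hEven : genVN (evenPart A Γ) = genVN S₀ := by
    refine genVN_eq_of_subset_of_subset_genVN
      (fun s hs => ⟨h.subset_starSubalgebra ℂ (Or.inl hs), h₀ s hs⟩) ?_
    rintro a ⟨ha, haΓ⟩
    obtain ⟨a₀, ha₀, a₁, ha₁, rfl⟩ := h.mem_starSubalgebra.1 ha
    rw [hconj ha₀ ha₁, sub_eq_add_neg, add_right_inj] at haΓ
    have h2a₁ : (2 : ℂ) • a₁ = 0 := by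
      rw [two_smul]; nth_rewrite 1 [← haΓ]; exact neg_add_cancel a₁
    rw [(smul_eq_zero.1 h2a₁).resolve_left two_ne_zero, add_zero, genVN,
      ← Subalgebra.coe_centralizer ℂ]
    exact (Submodule.span_le (p := Subalgebra.toSubmodule (Subalgebra.centralizer ℂ _))).2
      (fun s hs => Set.subset_centralizer_centralizer hs) ha₀
  rw [← hA, evenPart_genVN_of_conj_mem A hΓ hAΓ, hEven]

lemma isGradedStarFamily_evenPart_oddPart (R : StarSubalgebra ℂ (H →L[ℂ] H)) {Γ : H →L[ℂ] H}
    (hΓ : IsSAU Γ) : IsGradedStarFamily (evenPart R Γ) (oddPart R Γ) where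
  one_mem := ⟨R.one_mem, by rw [mul_one, hΓ.2]⟩
  mul_even_even := Set.mul_subset_iff.2 fun b hb c hc =>
    ⟨R.mul_mem hb.1 hc.1, by rw [hΓ.conj_mul, hb.2, hc.2]⟩
  mul_even_odd := Set.mul_subset_iff.2 fun b hb c hc =>
    ⟨R.mul_mem hb.1 hc.1, by rw [hΓ.conj_mul, hb.2, hc.2, mul_neg]⟩
  mul_odd_even := Set.mul_subset_iff.2 fun b hb c hc =>
    ⟨R.mul_mem hb.1 hc.1, by rw [hΓ.conj_mul, hb.2, hc.2, neg_mul]⟩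
  mul_odd_odd := Set.mul_subset_iff.2 fun b hb c hc =>
    ⟨R.mul_mem hb.1 hc.1, by rw [hΓ.conj_mul, hb.2, hc.2, neg_mul_neg]⟩
  star_even b hb := ⟨star_mem hb.1, by rw [← hΓ.star_conj, hb.2]⟩
  star_odd b hb := ⟨star_mem hb.1, by rw [← hΓ.star_conj, hb.2, star_neg]⟩

section Tensor

variable {H₁ H₂ K : Type*}
  [NormedAddCommGroup H₁] [InnerProductSpace ℂ H₁] [CompleteSpace H₁]
  [NormedAddCommGroup H₂] [InnerProductSpace ℂ H₂] [CompleteSpace H₂]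
  [NormedAddCommGroup K] [InnerProductSpace ℂ K] [CompleteSpace K]
  {T : (H₁ →L[ℂ] H₁) → (H₂ →L[ℂ] H₂) → (K →L[ℂ] K)}

namespace IsTensorMap

lemma map_mul (hT : IsTensorMap T) (A B C D) : T A B * T C D = T (A * C) (B * D) := hT.2.1 A B C D

lemma map_star (hT : IsTensorMap T) (A B) : star (T A B) = T (star A) (star B) := hT.2.2.1 A B

lemma map_neg_right (hT : IsTensorMap T) (A B) : T A (-B) = -T A B := by
  rw [← neg_one_smul ℂ B, hT.2.2.2.2.2.2, neg_one_smul]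

lemma conj (hT : IsTensorMap T) (Γ A B) : T 1 Γ * T A B * T 1 Γ = T A (Γ * B * Γ) := by
  rw [hT.map_mul, hT.map_mul, one_mul, mul_one]

lemma isSAU (hT : IsTensorMap T) {A B} (hA : IsSAU A) (hB : IsSAU B) : IsSAU (T A B) :=
  ⟨by rw [hT.map_star, hA.1, hB.1], by rw [hT.map_mul, hA.2, hB.2, hT.1]⟩

end IsTensorMap

variable (T) in
def gradedTPEvenGens (R₁ : Set (H₁ →L[ℂ] H₁)) (R₂ : Set (H₂ →L[ℂ] H₂)) (Γ₂ : H₂ →L[ℂ] H₂) :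
    Set (K →L[ℂ] K) :=
  {x | ∃ A ∈ R₁, ∃ B ∈ evenPart R₂ Γ₂, x = T A B}

variable (T) in
def gradedTPOddGens (R₁ : Set (H₁ →L[ℂ] H₁)) (Γ₁ : H₁ →L[ℂ] H₁) (R₂ : Set (H₂ →L[ℂ] H₂))
    (Γ₂ : H₂ →L[ℂ] H₂) : Set (K →L[ℂ] K) :=
  {x | ∃ A ∈ R₁, ∃ B ∈ oddPart R₂ Γ₂, x = T (A * Γ₁) B}

lemma isGradedStarFamily_gradedTPGens (hT : IsTensorMap T) {R₁ : StarSubalgebra ℂ (H₁ →L[ℂ] H₁)}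
    {Γ₁ : H₁ →L[ℂ] H₁} (h₁ : GradedBy R₁ Γ₁) (R₂ : StarSubalgebra ℂ (H₂ →L[ℂ] H₂))
    {Γ₂ : H₂ →L[ℂ] H₂} (hΓ₂ : IsSAU Γ₂) :
    IsGradedStarFamily (gradedTPEvenGens T R₁ R₂ Γ₂) (gradedTPOddGens T R₁ Γ₁ R₂ Γ₂) := by
  have h₂ := isGradedStarFamily_evenPart_oddPart R₂ hΓ₂
  refine ⟨⟨1, R₁.one_mem, 1, h₂.one_mem, hT.1.symm⟩, ?_, ?_, ?_, ?_, ?_, ?_⟩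
  · refine Set.mul_subset_iff.2 ?_
    rintro _ ⟨A, hA, B, hB, rfl⟩ _ ⟨A', hA', B', hB', rfl⟩
    exact ⟨A * A', R₁.mul_mem hA hA', B * B', h₂.mul_even_even (Set.mul_mem_mul hB hB'),
      hT.map_mul _ _ _ _⟩
  · refine Set.mul_subset_iff.2 ?_
    rintro _ ⟨A, hA, B, hB, rfl⟩ _ ⟨A', hA', B', hB', rfl⟩
    exact ⟨A * A', R₁.mul_mem hA hA', B * B', h₂.mul_even_odd (Set.mul_mem_mul hB hB'),
      by rw [hT.map_mul, mul_assoc]⟩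
  · refine Set.mul_subset_iff.2 ?_
    rintro _ ⟨A, hA, B, hB, rfl⟩ _ ⟨A', hA', B', hB', rfl⟩
    exact ⟨A * (Γ₁ * A' * Γ₁), R₁.mul_mem hA (h₁.2 A' hA'), B * B',
      h₂.mul_odd_even (Set.mul_mem_mul hB hB'), by rw [hT.map_mul, h₁.1.mul_conj_mul]⟩
  · refine Set.mul_subset_iff.2 ?_
    rintro _ ⟨A, hA, B, hB, rfl⟩ _ ⟨A', hA', B', hB', rfl⟩
    exact ⟨A * (Γ₁ * A' * Γ₁), R₁.mul_mem hA (h₁.2 A' hA'), B * B',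
      h₂.mul_odd_odd (Set.mul_mem_mul hB hB'), by
        rw [hT.map_mul, ← mul_assoc, h₁.1.mul_conj_mul, mul_assoc _ Γ₁, h₁.1.2, mul_one]⟩
  · rintro _ ⟨A, hA, B, hB, rfl⟩
    exact ⟨star A, star_mem hA, star B, h₂.star_even B hB, hT.map_star A B⟩
  · rintro _ ⟨A, hA, B, hB, rfl⟩
    refine ⟨Γ₁ * star A * Γ₁, h₁.2 _ (star_mem hA), star B, h₂.star_odd B hB, ?_⟩
    rw [hT.map_star, star_mul, h₁.1.1, mul_assoc _ Γ₁, h₁.1.2, mul_one]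

end Tensor

/-- the even part of `R₁ ⊗̂ R₂` for the grading `Ad_{1⊗Γ₂}` is
`R₁ ⊗̄ (R₂)⁰`; and if `(R₂, Ad_{Γ₂})` is balanced then so is `(R₁ ⊗̂ R₂, Ad_{1⊗Γ₂})`. -/
theorem stmt_17 {H₁ H₂ K : Type*}
    [NormedAddCommGroup H₁] [InnerProductSpace ℂ H₁] [CompleteSpace H₁]
    [NormedAddCommGroup H₂] [InnerProductSpace ℂ H₂] [CompleteSpace H₂]
    [NormedAddCommGroup K] [InnerProductSpace ℂ K] [CompleteSpace K]
    (T : (H₁ →L[ℂ] H₁) → (H₂ →L[ℂ] H₂) → (K →L[ℂ] K)) (hT : IsTensorMap T)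
    (R₁ : VonNeumannAlgebra H₁) (Γ₁ : H₁ →L[ℂ] H₁)
    (h₁ : GradedBy (R₁ : Set (H₁ →L[ℂ] H₁)) Γ₁)
    (R₂ : VonNeumannAlgebra H₂) (Γ₂ : H₂ →L[ℂ] H₂)
    (h₂ : GradedBy (R₂ : Set (H₂ →L[ℂ] H₂)) Γ₂) :
    evenPart (gradedTP T (R₁ : Set (H₁ →L[ℂ] H₁)) Γ₁ (R₂ : Set (H₂ →L[ℂ] H₂)) Γ₂)
        (T 1 Γ₂) =
      genVN {x | ∃ A ∈ (R₁ : Set (H₁ →L[ℂ] H₁)),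
        ∃ B ∈ evenPart (R₂ : Set (H₂ →L[ℂ] H₂)) Γ₂, x = T A B} ∧
    ((∃ U ∈ oddPart (R₂ : Set (H₂ →L[ℂ] H₂)) Γ₂, star U = U ∧ U * U = 1) →
      ∃ W ∈ oddPart
        (gradedTP T (R₁ : Set (H₁ →L[ℂ] H₁)) Γ₁ (R₂ : Set (H₂ →L[ℂ] H₂)) Γ₂)
        (T 1 Γ₂), star W = W ∧ W * W = 1) := by
  have hgens := isGradedStarFamily_gradedTPGens hT (R₁ := R₁.toStarSubalgebra) h₁
    R₂.toStarSubalgebra h₂.1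
  refine ⟨evenPart_genVN_union hgens (hT.isSAU isSAU_one h₂.1) ?_ ?_, ?_⟩
  · rintro _ ⟨A, -, B, hB, rfl⟩
    rw [hT.conj, hB.2]
  · rintro _ ⟨A, -, B, hB, rfl⟩
    rw [hT.conj, hB.2, hT.map_neg_right]
  · rintro ⟨U, hU, hUsa⟩
    have hW : T Γ₁ U ∈ gradedTPOddGens T R₁ Γ₁ R₂ Γ₂ := ⟨1, R₁.one_mem, U, hU, by rw [one_mul]⟩
    refine ⟨T Γ₁ U, ⟨Set.subset_centralizer_centralizer (Or.inr hW), ?_⟩, hT.isSAU h₁.1 hUsa⟩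
    rw [hT.conj, hU.2, hT.map_neg_right]
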